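/- arXiv:2502.16497 — 11 statements merged into one kernel-verified Lean document; each statement's English description precedes it below -/
import Mathlib

section
/- Let c be a real constant with 0 < c ≤ min(1 − 2^(−1/γ), 2^(1/γ) − 1). Then for every x ∈ N and every y ∈ M with d(x,y) ≤ Q(x), one has (1/2)·Q(x) ≤ Q(y) ≤ 2·Q(x). -/
open Metric

theorem stmt_0 {M : Type*} [MetricSpace M] (N : Set M) (hNopen : IsOpen N)
    (hNne : N.Nonempty) (hNcne : Nᶜ.Nonempty)
    (hdist : ∀ z : M, Metric.infDist z Nᶜ < 1)
    (γ r₀ c : ℝ) (hγ : 1 < γ) (hr₀ : 0 < r₀) (hr₀1 : r₀ ≤ 1)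
    (hc0 : 0 < c)
    (hc : c ≤ min (1 - (2 : ℝ) ^ (-1 / γ)) ((2 : ℝ) ^ (1 / γ) - 1))
    (Q : M → ℝ)
    (hQ : ∀ z : M, Q z = c * min (r₀ ^ γ) (Metric.infDist z Nᶜ ^ γ)) :
    ∀ x ∈ N, ∀ y : M, dist x y ≤ Q x →
      (1 / 2) * Q x ≤ Q y ∧ Q y ≤ 2 * Q x := by
  intro x hx y hxy
  have hγ0 : (0:ℝ) < γ := lt_trans one_pos hγ
  have hγne : γ ≠ 0 := ne_of_gt hγ0
  set m : M → ℝ := fun z => min r₀ (infDist z Nᶜ) with hm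
  have hm0 : ∀ z, 0 ≤ m z := fun z => le_min hr₀.le infDist_nonneg
  have hm1 : ∀ z, m z ≤ 1 := fun z => le_trans (min_le_left _ _) hr₀1
  have hQm : ∀ z, Q z = c * m z ^ γ := by
    intro z
    rw [hQ]
    congr 1
    rcases le_total r₀ (infDist z Nᶜ) with h | h
    · rw [show m z = r₀ from min_eq_left h,
        min_eq_left (Real.rpow_le_rpow hr₀.le h hγ0.le)]
    · rw [show m z = infDist z Nᶜ from min_eq_right h,
        min_eq_right (Real.rpow_le_rpow infDist_nonneg h hγ0.le)]
  have hlip : ∀ a b : M, m a ≤ m b + dist a b := by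
    intro a b
    have h1 : infDist a Nᶜ ≤ infDist b Nᶜ + dist a b := infDist_le_infDist_add_dist
    calc m a ≤ min (r₀ + dist a b) (infDist b Nᶜ + dist a b) :=
          min_le_min (le_add_of_nonneg_right dist_nonneg) h1
      _ = m b + dist a b := min_add_add_right _ _ _
  rcases eq_or_lt_of_le (hm0 x) with h0 | h0
  · have hQx : Q x = 0 := by
      rw [hQm, ← h0, Real.zero_rpow hγne, mul_zero]
    have hd0 : dist x y = 0 := le_antisymm (hQx ▸ hxy) dist_nonneg
    have hxy' : y = x := (eq_of_dist_eq_zero hd0).symm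
    subst hxy'
    simp [hQx]
  · have hQx : Q x ≤ c * m x := by
      rw [hQm]
      have : m x ^ γ ≤ m x := by
        calc m x ^ γ ≤ m x ^ (1:ℝ) :=
              Real.rpow_le_rpow_of_exponent_ge h0 (hm1 x) hγ.le
          _ = m x := Real.rpow_one _
      exact mul_le_mul_of_nonneg_left this hc0.le
    have ht : dist x y ≤ c * m x := le_trans hxy hQx
    have hc1 := (le_min_iff.mp hc).1
    have hc2 := (le_min_iff.mp hc).2
    have hlow : (2:ℝ)^(-1/γ) * m x ≤ m y := by
      have h1 : m x ≤ m y + c * m x := le_trans (hlip x y) (by linarith)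
      nlinarith [hm0 x]
    have hhigh : m y ≤ (2:ℝ)^(1/γ) * m x := by
      have h1 : m y ≤ m x + c * m x := by
        have := hlip y x
        rw [dist_comm] at this
        linarith
      nlinarith [hm0 x]
    have hp1 : ((2:ℝ)^(1/γ)) ^ γ = 2 := by
      rw [← Real.rpow_mul (by norm_num), one_div, inv_mul_cancel₀ hγne, Real.rpow_one]
    have hp2 : ((2:ℝ)^(-1/γ)) ^ γ = 1/2 := by
      rw [← Real.rpow_mul (by norm_num), div_mul_cancel₀ _ hγne]
      norm_num [Real.rpow_neg_one]
    constructor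
    · rw [hQm x, hQm y]
      have hle : ((2:ℝ)^(-1/γ) * m x) ^ γ ≤ m y ^ γ :=
        Real.rpow_le_rpow (by positivity) hlow hγ0.le
      rw [Real.mul_rpow (by positivity) (hm0 x), hp2] at hle
      nlinarith
    · rw [hQm x, hQm y]
      have hle : m y ^ γ ≤ ((2:ℝ)^(1/γ) * m x) ^ γ :=
        Real.rpow_le_rpow (hm0 y) hhigh hγ0.le
      rw [Real.mul_rpow (by positivity) (hm0 x), hp1] at hle
      nlinarith
end

section
/- For every x ∈ N and every λ > 0 there exists K ∈ ℕ such that: for every y ∈ N, if d(fⁿ(x), fⁿ(y)) ≤ Q(fⁿ(x)) for all integers n with |n| ≤ K, then d(x,y) < λ. -/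
theorem stmt_1 {M : Type*} [MetricSpace M] [CompactSpace M]
    (f : M ≃ₜ M) (N : Set M) (hfN : f '' N = N)
    (Q : M → ℝ) (hQ : ∀ z ∈ N, 0 ≤ Q z ∧ Q z < Metric.infDist z Nᶜ)
    (hexp : ∀ x ∈ N, ∀ y ∈ N,
      (∀ n : ℤ, dist ((f.toEquiv ^ n) x) ((f.toEquiv ^ n) y) ≤ Q ((f.toEquiv ^ n) x)) →
      x = y) :
    ∀ x ∈ N, ∀ lam : ℝ, 0 < lam → ∃ K : ℕ, ∀ y ∈ N,
      (∀ n : ℤ, |n| ≤ (K : ℤ) →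
        dist ((f.toEquiv ^ n) x) ((f.toEquiv ^ n) y) ≤ Q ((f.toEquiv ^ n) x)) →
      dist x y < lam := by
  -- continuity of the iterates
  have contZ : ∀ n : ℤ, Continuous fun w => (f.toEquiv ^ n) w := by
    intro n
    induction n using Int.rec with
    | ofNat m =>
      show Continuous fun w => (f.toEquiv ^ (m : ℤ)) w
      rw [zpow_natCast, Equiv.Perm.coe_pow]
      exact f.continuous.iterate m
    | negSucc m =>
      have : ((f.toEquiv ^ (Int.negSucc m)) : M ≃ M) = (f.toEquiv⁻¹) ^ (m + 1) := by
        rw [zpow_negSucc, inv_pow]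
      rw [this, Equiv.Perm.coe_pow]
      exact f.symm.continuous.iterate (m + 1)
  intro x hx lam hlam
  by_contra hcon
  push_neg at hcon
  choose y hyN hyd hylam using hcon
  obtain ⟨z, -, φ, hφ, hconv⟩ :=
    isCompact_univ.tendsto_subseq (fun K => Set.mem_univ (y K))
  -- the limit satisfies the full condition
  have key : ∀ n : ℤ, dist ((f.toEquiv ^ n) x) ((f.toEquiv ^ n) z)
      ≤ Q ((f.toEquiv ^ n) x) := by
    intro n
    have hlim : Filter.Tendsto
        (fun k => dist ((f.toEquiv ^ n) x) ((f.toEquiv ^ n) (y (φ k))))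
        Filter.atTop (nhds (dist ((f.toEquiv ^ n) x) ((f.toEquiv ^ n) z))) :=
      (Continuous.dist continuous_const (contZ n)).continuousAt.tendsto.comp hconv
    refine le_of_tendsto hlim ?_
    filter_upwards [Filter.eventually_ge_atTop n.natAbs] with k hk
    refine hyd (φ k) n ?_
    have : (n.natAbs : ℤ) ≤ (φ k : ℤ) := by
      exact_mod_cast Int.ofNat_le.mpr (le_trans hk (hφ.le_apply))
    rw [Int.abs_eq_natAbs]
    exact this
  -- z ∈ N
  have hzN : z ∈ N := by
    by_contra hz
    have h1 : Metric.infDist x Nᶜ ≤ dist x z := Metric.infDist_le_dist_of_mem hz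
    have h2 := key 0
    simp only [zpow_zero, Equiv.Perm.coe_one, id_eq] at h2
    exact absurd (lt_of_le_of_lt h2 (hQ x hx).2) (not_lt.mpr h1)
  -- expansivity gives x = z
  have hxz : x = z := hexp x hx z hzN key
  -- contradiction with lam ≤ dist x (y (φ k))
  have hconv' : Filter.Tendsto (fun k => dist x (y (φ k))) Filter.atTop (nhds (dist x z)) :=
    Filter.Tendsto.dist tendsto_const_nhds hconv
  rw [← hxz, dist_self] at hconv'
  have : ∀ᶠ k in Filter.atTop, dist x (y (φ k)) < lam :=
    hconv'.eventually_lt_const hlam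
  obtain ⟨k, hk⟩ := this.exists
  exact absurd hk (not_lt.mpr (hylam (φ k)))
end

section
/- There exists a unique v in the closed ball of radius Q centered at 0 in E such that φˢ(φᵘ(v)) = v. Moreover this v satisfies ‖v‖ ≤ 10⁻²·Q, ‖φᵘ(v)‖ ≤ 10⁻²·Q, and ‖v‖ + ‖φᵘ(v)‖ ≤ Q/50. -/
/-!
The composite `φˢ ∘ φᵘ` is `L²`-Lipschitz on the ball of radius `Q`, with `L² < 1`, and it maps
the ball into itself since `‖φ x‖ ≤ ‖φ 0‖ + L Q ≤ Q / 100` for both maps. The contraction mapping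
principle on the (complete) closed ball gives the unique fixed point `v`, and the same estimate
bounds `‖v‖ = ‖φˢ (φᵘ v)‖` and `‖φᵘ v‖` by `Q / 100`.
-/

open NNReal Metric Set Function

theorem exists_isFixedPt_unique_of_lipschitzOnWith {α : Type*} [MetricSpace α] {K : ℝ≥0}
    {f : α → α} {s : Set α} (hs : IsComplete s) (hsf : MapsTo f s s) (hK : K < 1)
    (hf : LipschitzOnWith K f s) {x₀ : α} (hx₀ : x₀ ∈ s) :
    ∃ v ∈ s, IsFixedPt f v ∧ ∀ w ∈ s, IsFixedPt f w → w = v := by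
  have hc : ContractingWith K (hsf.restrict f s s) := ⟨hK, hf.mapsToRestrict hsf⟩
  obtain ⟨v, hv, hfix, -, -⟩ := hc.exists_fixedPoint' hs hsf hx₀ (edist_ne_top _ _)
  refine ⟨v, hv, hfix, fun w hw hwfix => ?_⟩
  exact congrArg Subtype.val
    (hc.fixedPoint_unique' (x := ⟨w, hw⟩) (y := ⟨v, hv⟩) (Subtype.ext hwfix) (Subtype.ext hfix))

section Norm

variable {E F : Type*} [SeminormedAddCommGroup E] [SeminormedAddCommGroup F] {f : E → F}
  {K : ℝ≥0} {r : ℝ} {x : E}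

theorem LipschitzOnWith.norm_le_of_mem_closedBall (hf : LipschitzOnWith K f (closedBall 0 r))
    (hx : x ∈ closedBall 0 r) : ‖f x‖ ≤ ‖f 0‖ + K * r := by
  have h0 : (0 : E) ∈ closedBall 0 r := mem_closedBall_self (nonempty_closedBall.mp ⟨x, hx⟩)
  calc ‖f x‖ ≤ ‖f 0‖ + ‖f x - f 0‖ := norm_le_norm_add_norm_sub' _ _
    _ ≤ ‖f 0‖ + K * ‖x - 0‖ := by gcongr; exact hf.norm_sub_le hx h0
    _ ≤ ‖f 0‖ + K * r := by
      rw [sub_zero]; gcongr; exact mem_closedBall_zero_iff.mp hx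

theorem LipschitzOnWith.norm_le_inv_hundred_mul (hK : (K : ℝ) ≤ (100 : ℝ)⁻¹ - (1000 : ℝ)⁻¹)
    (hf : LipschitzOnWith K f (closedBall 0 r)) (hf0 : ‖f 0‖ ≤ (1000 : ℝ)⁻¹ * r)
    (hx : x ∈ closedBall 0 r) : ‖f x‖ ≤ (100 : ℝ)⁻¹ * r := by
  have hr : 0 ≤ r := nonempty_closedBall.mp ⟨x, hx⟩
  have hKr : (K : ℝ) * r ≤ ((100 : ℝ)⁻¹ - (1000 : ℝ)⁻¹) * r := by gcongr
  linarith [hf.norm_le_of_mem_closedBall hx]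

end Norm

theorem stmt_2 {E F : Type*} [NormedAddCommGroup E] [NormedSpace ℝ E] [CompleteSpace E]
    [NormedAddCommGroup F] [NormedSpace ℝ F]
    (Q : ℝ) (hQ : 0 < Q) (L : ℝ≥0)
    (hL : (L : ℝ) ≤ (100 : ℝ)⁻¹ - (1000 : ℝ)⁻¹)
    (φu : E → F) (φs : F → E)
    (hφuLip : LipschitzOnWith L φu (Metric.closedBall (0 : E) Q))
    (hφsLip : LipschitzOnWith L φs (Metric.closedBall (0 : F) Q))
    (hφu0 : ‖φu 0‖ ≤ (1000 : ℝ)⁻¹ * Q) (hφs0 : ‖φs 0‖ ≤ (1000 : ℝ)⁻¹ * Q) :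
    ∃ v ∈ Metric.closedBall (0 : E) Q,
      φs (φu v) = v ∧
      ‖v‖ ≤ (100 : ℝ)⁻¹ * Q ∧ ‖φu v‖ ≤ (100 : ℝ)⁻¹ * Q ∧ ‖v‖ + ‖φu v‖ ≤ Q / 50 ∧
      ∀ w ∈ Metric.closedBall (0 : E) Q, φs (φu w) = w → w = v := by
  have hu {x : E} (hx : x ∈ closedBall 0 Q) := hφuLip.norm_le_inv_hundred_mul hL hφu0 hx
  have hs {y : F} (hy : y ∈ closedBall 0 Q) := hφsLip.norm_le_inv_hundred_mul hL hφs0 hy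
  have hmapsu : MapsTo φu (closedBall 0 Q) (closedBall 0 Q) := fun x hx =>
    mem_closedBall_zero_iff.mpr (by linarith [hu hx])
  have hmapss : MapsTo φs (closedBall 0 Q) (closedBall 0 Q) := fun y hy =>
    mem_closedBall_zero_iff.mpr (by linarith [hs hy])
  have hLL : L * L < 1 := by
    rw [← NNReal.coe_lt_coe, NNReal.coe_mul, NNReal.coe_one]
    nlinarith [L.coe_nonneg]
  obtain ⟨v, hv, hfix, huniq⟩ := exists_isFixedPt_unique_of_lipschitzOnWith
    isClosed_closedBall.isComplete (hmapss.comp hmapsu) hLL (hφsLip.comp hφuLip hmapsu)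
    (mem_closedBall_self hQ.le)
  have hvnorm : ‖v‖ ≤ (100 : ℝ)⁻¹ * Q := hfix ▸ hs (hmapsu hv)
  exact ⟨v, hv, hfix, hvnorm, hu hv, by linarith [hu hv], huniq⟩
end

section
/- The limit φ is differentiable on B: there is a map σ from B to the continuous linear maps E → F such that φ has derivative σ(v) at each v ∈ B (derivative within B), and moreover: ‖φ(0)‖ ≤ a; ‖σ(v)‖ ≤ b for all v ∈ B; ‖σ(v) − σ(w)‖ ≤ H·‖v − w‖^θ for all v, w ∈ B; and the derivatives Dφₙ converge to σ uniformly on B. -/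
/-!
Write `g = φₘ - φₙ`. If `‖g‖ ≤ ε` on the ball and `Dg` is `2H`-Hölder, then the Taylor estimate
`‖g(y + z) - g(y) - Dg(y) z‖ ≤ 2H ‖z‖^θ ‖z‖` at a point `y` whose `r`-ball lies in the ball gives
`‖Dg(y)‖ ≤ 2ε/r + 2H r^θ`, and every point of the ball is within `r` of such a `y`. Choosing `r`
small and then `ε` small shows that the `Dφₙ` are uniformly Cauchy. Their limit `σ` inherits the
bounds, and the Taylor estimate `‖φₙ(w) - φₙ(v) - Dφₙ(v)(w - v)‖ ≤ H ‖w - v‖^θ ‖w - v‖` passes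
to the limit, which makes `σ(v)` the derivative of `φ` at `v`.
-/

open Filter Topology Metric

section

variable {E F : Type*} [NormedAddCommGroup E] [NormedSpace ℝ E]
  [NormedAddCommGroup F] [NormedSpace ℝ F]

theorem tendsto_const_mul_rpow_nhds_zero (H : ℝ) {θ : ℝ} (hθ : 0 < θ) :
    Tendsto (fun t : ℝ => H * t ^ θ) (𝓝 0) (𝓝 0) := by
  simpa [Real.zero_rpow hθ.ne'] using
    ((continuousAt_id (x := (0 : ℝ))).rpow_const (Or.inr hθ.le)).tendsto.const_mul H

theorem hasFDerivWithinAt_of_norm_sub_le_mul_rpow {f : E → F} {L : E →L[ℝ] F} {s : Set E}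
    {v : E} {H θ : ℝ} (hθ : 0 < θ)
    (h : ∀ w ∈ s, ‖f w - f v - L (w - v)‖ ≤ H * ‖w - v‖ ^ θ * ‖w - v‖) :
    HasFDerivWithinAt f L s v := by
  have hlim : Tendsto (fun w => H * ‖w - v‖ ^ θ) (𝓝[s] v) (𝓝 0) :=
    ((tendsto_const_mul_rpow_nhds_zero H hθ).comp (tendsto_norm_sub_self v)).mono_left
      nhdsWithin_le_nhds
  refine .of_isLittleO <| Asymptotics.isLittleO_iff.2 fun c hc => ?_
  filter_upwards [hlim.eventually (ge_mem_nhds hc), self_mem_nhdsWithin] with w hwc hws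
  exact (h w hws).trans (by gcongr)

theorem exists_closedBall_subset_closedBall_dist_le {c v : E} {Q r : ℝ}
    (hv : v ∈ closedBall c Q) (hr : 0 < r) (hrQ : r ≤ Q) :
    ∃ y, closedBall y r ⊆ closedBall c Q ∧ dist v y ≤ r := by
  have hQ : 0 < Q := hr.trans_le hrQ
  have hvc : dist v c ≤ Q := hv
  have hrQ1 : r / Q ≤ 1 := (div_le_one hQ).2 hrQ
  refine ⟨AffineMap.lineMap v c (r / Q), closedBall_subset_closedBall' ?_, ?_⟩
  · rw [dist_lineMap_right, Real.norm_of_nonneg (by linarith)]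
    calc r + (1 - r / Q) * dist v c ≤ r + (1 - r / Q) * Q := by gcongr
      _ = Q := by field_simp; ring
  · rw [dist_comm, dist_lineMap_left, Real.norm_of_nonneg (by positivity)]
    calc r / Q * dist v c ≤ r / Q * Q := by gcongr
      _ = r := by field_simp

section Holder

variable {f : E → F} {f' : E → E →L[ℝ] F} {s : Set E} {c : E} {Q H θ ε r : ℝ}

theorem Convex.norm_image_sub_sub_le_of_holder (hs : Convex ℝ s)
    (hf : ∀ x ∈ s, HasFDerivWithinAt f (f' x) s x) (hH : 0 ≤ H) (hθ : 0 ≤ θ)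
    (hf' : ∀ x ∈ s, ∀ y ∈ s, ‖f' x - f' y‖ ≤ H * ‖x - y‖ ^ θ) {v w : E} (hv : v ∈ s)
    (hw : w ∈ s) : ‖f w - f v - f' v (w - v)‖ ≤ H * ‖w - v‖ ^ θ * ‖w - v‖ := by
  have hseg : segment ℝ v w ⊆ s := hs.segment_subset hv hw
  refine (convex_segment v w).norm_image_sub_le_of_norm_hasFDerivWithin_le'
    (fun u hu => (hf u (hseg hu)).mono hseg) (fun u hu => ?_)
    (left_mem_segment ℝ v w) (right_mem_segment ℝ v w)
  calc ‖f' u - f' v‖ ≤ H * ‖u - v‖ ^ θ := hf' u (hseg hu) v hv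
    _ ≤ H * ‖w - v‖ ^ θ := by gcongr; exact norm_sub_le_of_mem_segment hu

theorem Convex.norm_le_of_norm_image_le_of_holder (hs : Convex ℝ s)
    (hf : ∀ x ∈ s, HasFDerivWithinAt f (f' x) s x) (hH : 0 ≤ H) (hθ : 0 ≤ θ)
    (hf' : ∀ x ∈ s, ∀ y ∈ s, ‖f' x - f' y‖ ≤ H * ‖x - y‖ ^ θ)
    (hε : ∀ x ∈ s, ‖f x‖ ≤ ε) (hr : 0 < r) {y : E} (hy : closedBall y r ⊆ s) :
    ‖f' y‖ ≤ 2 * ε / r + H * r ^ θ := by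
  have hys : y ∈ s := hy (mem_closedBall_self hr.le)
  have hε0 : 0 ≤ ε := (norm_nonneg _).trans (hε y hys)
  refine ContinuousLinearMap.opNorm_le_of_unit_norm (by positivity) fun z hz => ?_
  have hyz : y + r • z ∈ s := hy (by simp [norm_smul, hz, abs_of_pos hr])
  have htaylor := hs.norm_image_sub_sub_le_of_holder hf hH hθ hf' hys hyz
  simp only [add_sub_cancel_left, map_smul, norm_smul, hz, Real.norm_of_nonneg hr.le,
    mul_one] at htaylor
  have hbound : r * ‖f' y z‖ ≤ 2 * ε + H * r ^ θ * r :=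
    calc r * ‖f' y z‖ = ‖(f (y + r • z) - f y) - (f (y + r • z) - f y - r • f' y z)‖ := by
          rw [sub_sub_cancel, norm_smul, Real.norm_of_nonneg hr.le]
      _ ≤ ‖f (y + r • z)‖ + ‖f y‖ + H * r ^ θ * r :=
          (norm_sub_le _ _).trans (add_le_add (norm_sub_le _ _) htaylor)
      _ ≤ 2 * ε + H * r ^ θ * r := by linarith [hε _ hyz, hε y hys]
  rw [show 2 * ε / r + H * r ^ θ = (2 * ε + H * r ^ θ * r) / r by field_simp, le_div_iff₀ hr]
  linarith

theorem norm_le_of_norm_image_le_of_holder_closedBall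
    (hf : ∀ x ∈ closedBall c Q, HasFDerivWithinAt f (f' x) (closedBall c Q) x) (hH : 0 ≤ H)
    (hθ : 0 ≤ θ)
    (hf' : ∀ x ∈ closedBall c Q, ∀ y ∈ closedBall c Q, ‖f' x - f' y‖ ≤ H * ‖x - y‖ ^ θ)
    (hε : ∀ x ∈ closedBall c Q, ‖f x‖ ≤ ε) (hr : 0 < r) (hrQ : r ≤ Q) {v : E}
    (hv : v ∈ closedBall c Q) : ‖f' v‖ ≤ 2 * ε / r + 2 * H * r ^ θ := by
  obtain ⟨y, hyB, hvy⟩ := exists_closedBall_subset_closedBall_dist_le hv hr hrQ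
  have hy : y ∈ closedBall c Q := hyB (mem_closedBall_self hr.le)
  calc ‖f' v‖ ≤ ‖f' y‖ + ‖f' v - f' y‖ := norm_le_insert' _ _
    _ ≤ (2 * ε / r + H * r ^ θ) + H * r ^ θ := by
      gcongr
      · exact (convex_closedBall c Q).norm_le_of_norm_image_le_of_holder hf hH hθ hf' hε hr hyB
      · exact (hf' v hv y hy).trans (by gcongr; rwa [← dist_eq_norm])
    _ = 2 * ε / r + 2 * H * r ^ θ := by ring

end Holder

section Sequence

variable {ι : Type*} {l : Filter ι} {f : ι → E → F} {f' : ι → E → E →L[ℝ] F} {H θ : ℝ}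

theorem UniformCauchySeqOn.of_hasFDerivWithinAt_of_holder {c : E} {Q : ℝ} (hQ : 0 < Q)
    (hH : 0 ≤ H) (hθ : 0 < θ)
    (hf : ∀ n, ∀ x ∈ closedBall c Q, HasFDerivWithinAt (f n) (f' n x) (closedBall c Q) x)
    (hf' : ∀ n, ∀ x ∈ closedBall c Q, ∀ y ∈ closedBall c Q, ‖f' n x - f' n y‖ ≤ H * ‖x - y‖ ^ θ)
    (hcauchy : UniformCauchySeqOn f l (closedBall c Q)) :
    UniformCauchySeqOn f' l (closedBall c Q) := by
  intro u hu
  obtain ⟨δ, hδ, hδu⟩ := mem_uniformity_dist.1 hu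
  obtain ⟨r, hr, hrQ, hrH⟩ : ∃ r, 0 < r ∧ r ≤ Q ∧ 4 * H * r ^ θ < δ / 2 := by
    have hlim := (tendsto_const_mul_rpow_nhds_zero (4 * H) hθ).mono_left
      (nhdsWithin_le_nhds (s := Set.Ioi 0))
    obtain ⟨r, ⟨hr, hrQ⟩, hrH⟩ :=
      (Eventually.and (Ioc_mem_nhdsGT hQ) (hlim.eventually (gt_mem_nhds (half_pos hδ)))).exists
    exact ⟨r, hr, hrQ, hrH⟩
  filter_upwards [hcauchy _ (dist_mem_uniformity (by positivity : 0 < δ * r / 4))]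
    with mn hmn x hx
  have hdiff : ∀ y ∈ closedBall c Q, HasFDerivWithinAt (fun z => f mn.1 z - f mn.2 z)
      (f' mn.1 y - f' mn.2 y) (closedBall c Q) y :=
    fun y hy => (hf mn.1 y hy).sub (hf mn.2 y hy)
  have hholder : ∀ y ∈ closedBall c Q, ∀ z ∈ closedBall c Q,
      ‖(f' mn.1 y - f' mn.2 y) - (f' mn.1 z - f' mn.2 z)‖ ≤ 2 * H * ‖y - z‖ ^ θ := by
    intro y hy z hz
    rw [sub_sub_sub_comm, two_mul, add_mul]
    exact (norm_sub_le _ _).trans (add_le_add (hf' _ y hy z hz) (hf' _ y hy z hz))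
  have hsup : ∀ y ∈ closedBall c Q, ‖f mn.1 y - f mn.2 y‖ ≤ δ * r / 4 :=
    fun y hy => (dist_eq_norm (f mn.1 y) (f mn.2 y) ▸ hmn y hy).le
  have hbound := norm_le_of_norm_image_le_of_holder_closedBall hdiff (by positivity) hθ.le
    hholder hsup hr hrQ hx
  have hε : 2 * (δ * r / 4) / r = δ / 2 := by field_simp; ring
  exact hδu (by rw [dist_eq_norm]; linarith)

theorem Convex.hasFDerivWithinAt_of_tendsto_of_holder [l.NeBot] {g : E → F} {s : Set E}
    {v : E} {L : E →L[ℝ] F} (hs : Convex ℝ s)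
    (hf : ∀ n, ∀ x ∈ s, HasFDerivWithinAt (f n) (f' n x) s x) (hH : 0 ≤ H) (hθ : 0 < θ)
    (hf' : ∀ n, ∀ x ∈ s, ∀ y ∈ s, ‖f' n x - f' n y‖ ≤ H * ‖x - y‖ ^ θ)
    (hfg : ∀ x ∈ s, Tendsto (fun n => f n x) l (𝓝 (g x))) (hv : v ∈ s)
    (hL : Tendsto (fun n => f' n v) l (𝓝 L)) : HasFDerivWithinAt g L s v :=
  hasFDerivWithinAt_of_norm_sub_le_mul_rpow hθ fun w hw =>
    le_of_tendsto (((hfg w hw).sub (hfg v hv)).sub (hL.eval_const (w - v))).norm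
      (Eventually.of_forall fun n => hs.norm_image_sub_sub_le_of_holder (hf n) hH hθ.le (hf' n) hv hw)

end Sequence
end

theorem stmt_3_general {E F : Type*}
    [NormedAddCommGroup E] [NormedSpace ℝ E]
    [NormedAddCommGroup F] [NormedSpace ℝ F] [FiniteDimensional ℝ F]
    (Q : ℝ) (hQ : 0 < Q) (B : Set E) (hB : B = Metric.closedBall (0 : E) Q)
    (θ : ℝ) (hθ0 : 0 < θ)
    (a b H : ℝ) (hH : 0 ≤ H)
    (φ : ℕ → E → F) (Dφ : ℕ → E → (E →L[ℝ] F))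
    (hdiff : ∀ n, ∀ v ∈ B, HasFDerivWithinAt (φ n) (Dφ n v) B v)
    (h0 : ∀ n, ‖φ n 0‖ ≤ a)
    (hbd : ∀ n, ∀ v ∈ B, ‖Dφ n v‖ ≤ b)
    (hHol : ∀ n, ∀ v ∈ B, ∀ w ∈ B, ‖Dφ n v - Dφ n w‖ ≤ H * ‖v - w‖ ^ θ)
    (φlim : E → F) (hconv : TendstoUniformlyOn φ φlim atTop B) :
    ∃ σ : E → (E →L[ℝ] F),
      (∀ v ∈ B, HasFDerivWithinAt φlim (σ v) B v) ∧
      ‖φlim 0‖ ≤ a ∧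
      (∀ v ∈ B, ‖σ v‖ ≤ b) ∧
      (∀ v ∈ B, ∀ w ∈ B, ‖σ v - σ w‖ ≤ H * ‖v - w‖ ^ θ) ∧
      TendstoUniformlyOn Dφ σ atTop B := by
  subst hB
  have hcauchy : UniformCauchySeqOn Dφ atTop (closedBall 0 Q) :=
    hconv.uniformCauchySeqOn.of_hasFDerivWithinAt_of_holder hQ hH hθ0 hdiff hHol
  set σ : E → E →L[ℝ] F := fun v => limUnder atTop fun n => Dφ n v
  have hσ : ∀ v ∈ closedBall (0 : E) Q, Tendsto (fun n => Dφ n v) atTop (𝓝 (σ v)) :=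
    fun v hv => (hcauchy.cauchySeq hv).tendsto_limUnder
  refine ⟨σ, fun v hv => ?_, ?_, fun v hv => ?_, fun v hv w hw => ?_,
    hcauchy.tendstoUniformlyOn_of_tendsto hσ⟩
  · exact (convex_closedBall 0 Q).hasFDerivWithinAt_of_tendsto_of_holder hdiff hH hθ0 hHol
      (fun x hx => hconv.tendsto_at hx) hv (hσ v hv)
  · exact le_of_tendsto (hconv.tendsto_at (mem_closedBall_self hQ.le)).norm
      (Eventually.of_forall h0)
  · exact le_of_tendsto (hσ v hv).norm (Eventually.of_forall fun n => hbd n v hv)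
  · exact le_of_tendsto ((hσ v hv).sub (hσ w hw)).norm
      (Eventually.of_forall fun n => hHol n v hv w hw)

theorem stmt_3 {E F : Type*}
    [NormedAddCommGroup E] [NormedSpace ℝ E] [FiniteDimensional ℝ E]
    [NormedAddCommGroup F] [NormedSpace ℝ F] [FiniteDimensional ℝ F]
    (Q : ℝ) (hQ : 0 < Q) (B : Set E) (hB : B = Metric.closedBall (0 : E) Q)
    (θ : ℝ) (hθ0 : 0 < θ) (hθ1 : θ ≤ 1)
    (a b H : ℝ) (ha : 0 ≤ a) (hb : 0 ≤ b) (hH : 0 ≤ H)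
    (φ : ℕ → E → F) (Dφ : ℕ → E → (E →L[ℝ] F))
    (hdiff : ∀ n, ∀ v ∈ B, HasFDerivWithinAt (φ n) (Dφ n v) B v)
    (h0 : ∀ n, ‖φ n 0‖ ≤ a)
    (hbd : ∀ n, ∀ v ∈ B, ‖Dφ n v‖ ≤ b)
    (hHol : ∀ n, ∀ v ∈ B, ∀ w ∈ B, ‖Dφ n v - Dφ n w‖ ≤ H * ‖v - w‖ ^ θ)
    (φlim : E → F) (hconv : TendstoUniformlyOn φ φlim atTop B) :
    ∃ σ : E → (E →L[ℝ] F),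
      (∀ v ∈ B, HasFDerivWithinAt φlim (σ v) B v) ∧
      ‖φlim 0‖ ≤ a ∧
      (∀ v ∈ B, ‖σ v‖ ≤ b) ∧
      (∀ v ∈ B, ∀ w ∈ B, ‖σ v - σ w‖ ≤ H * ‖v - w‖ ^ θ) ∧
      TendstoUniformlyOn Dφ σ atTop B :=
  stmt_3_general Q hQ B hB θ hθ0 a b H hH φ Dφ hdiff h0 hbd hHol φlim hconv
end

section
/- If v = (v_u, v_s) ∈ E_u × E_s satisfies ‖v_s‖ ≤ κ·‖v_u‖, then the image w = A(v) satisfies ‖w_u‖ ≥ (m − ‖A_us‖·κ)·‖v_u‖ and ‖w_s‖ ≤ (‖A_ss‖·κ + ‖A_su‖)·‖v_u‖; consequently (m − ‖A_us‖·κ)·‖w_s‖ ≤ (‖A_ss‖·κ + ‖A_su‖)·‖w_u‖. -/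
/-!
Write `w = A v`. By the reverse triangle inequality the unstable component satisfies
`‖w_u‖ ≥ ‖A_uu v_u‖ - ‖A_us v_s‖ ≥ (m - ‖A_us‖ κ) ‖v_u‖`, and by the triangle inequality
`‖w_s‖ ≤ ‖A_su‖ ‖v_u‖ + ‖A_ss‖ κ ‖v_u‖`. Eliminating `‖v_u‖` between the two bounds gives the
slope estimate for the image cone.
-/

section ConeEstimates

variable {E E' F : Type*} [SeminormedAddCommGroup E] [NormedSpace ℝ E]
  [SeminormedAddCommGroup E'] [NormedSpace ℝ E'] [SeminormedAddCommGroup F] [NormedSpace ℝ F]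
  {x : E} {y : E'} {κ : ℝ}

theorem sub_opNorm_mul_mul_le_norm_add_apply (B : E' →L[ℝ] F) {u : F} {m t : ℝ}
    (hu : m * t ≤ ‖u‖) (hy : ‖y‖ ≤ κ * t) :
    (m - ‖B‖ * κ) * t ≤ ‖u + B y‖ := by
  have hBy : ‖B y‖ ≤ ‖B‖ * (κ * t) := B.le_opNorm_of_le hy
  have := norm_sub_le_norm_add u (B y)
  linarith

theorem norm_apply_add_apply_le (S : E →L[ℝ] F) (R : E' →L[ℝ] F) (hy : ‖y‖ ≤ κ * ‖x‖) :
    ‖S x + R y‖ ≤ (‖R‖ * κ + ‖S‖) * ‖x‖ :=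
  calc ‖S x + R y‖ ≤ ‖S x‖ + ‖R y‖ := norm_add_le _ _
    _ ≤ ‖S‖ * ‖x‖ + ‖R‖ * (κ * ‖x‖) := add_le_add (S.le_opNorm x) (R.le_opNorm_of_le hy)
    _ = (‖R‖ * κ + ‖S‖) * ‖x‖ := by ring

end ConeEstimates

theorem mul_le_mul_of_le_mul_of_mul_le {a b r p q : ℝ} (ha : 0 ≤ a) (hb : 0 ≤ b)
    (hp : a * r ≤ p) (hq : q ≤ b * r) : a * q ≤ b * p :=
  calc a * q ≤ a * (b * r) := mul_le_mul_of_nonneg_left hq ha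
    _ = b * (a * r) := by ring
    _ ≤ b * p := mul_le_mul_of_nonneg_left hp hb

theorem stmt_5_general {Eu Es Fu Fs : Type*}
    [NormedAddCommGroup Eu] [NormedSpace ℝ Eu]
    [NormedAddCommGroup Es] [NormedSpace ℝ Es]
    [NormedAddCommGroup Fu] [NormedSpace ℝ Fu]
    [NormedAddCommGroup Fs] [NormedSpace ℝ Fs]
    (A : Eu × Es →L[ℝ] Fu × Fs)
    (Auu : Eu →L[ℝ] Fu) (Aus : Es →L[ℝ] Fu) (Asu : Eu →L[ℝ] Fs) (Ass : Es →L[ℝ] Fs)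
    (hA : ∀ (vu : Eu) (vs : Es), A (vu, vs) = (Auu vu + Aus vs, Asu vu + Ass vs))
    (κ m : ℝ) (hκ : 0 ≤ κ)
    (hAuu : ∀ w : Eu, m * ‖w‖ ≤ ‖Auu w‖)
    (hpos : 0 < m - ‖Aus‖ * κ)
    (vu : Eu) (vs : Es) (hv : ‖vs‖ ≤ κ * ‖vu‖) :
    (m - ‖Aus‖ * κ) * ‖vu‖ ≤ ‖(A (vu, vs)).1‖ ∧
    ‖(A (vu, vs)).2‖ ≤ (‖Ass‖ * κ + ‖Asu‖) * ‖vu‖ ∧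
    (m - ‖Aus‖ * κ) * ‖(A (vu, vs)).2‖ ≤ (‖Ass‖ * κ + ‖Asu‖) * ‖(A (vu, vs)).1‖ := by
  have hu : (m - ‖Aus‖ * κ) * ‖vu‖ ≤ ‖(A (vu, vs)).1‖ := by
    rw [hA]
    exact sub_opNorm_mul_mul_le_norm_add_apply Aus (hAuu vu) hv
  have hs : ‖(A (vu, vs)).2‖ ≤ (‖Ass‖ * κ + ‖Asu‖) * ‖vu‖ := by
    rw [hA]
    exact norm_apply_add_apply_le Asu Ass hv
  exact ⟨hu, hs, mul_le_mul_of_le_mul_of_mul_le hpos.le (by positivity) hu hs⟩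

theorem stmt_5 {Eu Es Fu Fs : Type*}
    [NormedAddCommGroup Eu] [NormedSpace ℝ Eu]
    [NormedAddCommGroup Es] [NormedSpace ℝ Es]
    [NormedAddCommGroup Fu] [NormedSpace ℝ Fu]
    [NormedAddCommGroup Fs] [NormedSpace ℝ Fs]
    (A : Eu × Es →L[ℝ] Fu × Fs)
    (Auu : Eu →L[ℝ] Fu) (Aus : Es →L[ℝ] Fu) (Asu : Eu →L[ℝ] Fs) (Ass : Es →L[ℝ] Fs)
    (hA : ∀ (vu : Eu) (vs : Es), A (vu, vs) = (Auu vu + Aus vs, Asu vu + Ass vs))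
    (κ m : ℝ) (hκ : 0 ≤ κ) (hm : 0 < m)
    (hAuu : ∀ w : Eu, m * ‖w‖ ≤ ‖Auu w‖)
    (hpos : 0 < m - ‖Aus‖ * κ)
    (vu : Eu) (vs : Es) (hv : ‖vs‖ ≤ κ * ‖vu‖) :
    (m - ‖Aus‖ * κ) * ‖vu‖ ≤ ‖(A (vu, vs)).1‖ ∧
    ‖(A (vu, vs)).2‖ ≤ (‖Ass‖ * κ + ‖Asu‖) * ‖vu‖ ∧
    (m - ‖Aus‖ * κ) * ‖(A (vu, vs)).2‖ ≤ (‖Ass‖ * κ + ‖Asu‖) * ‖(A (vu, vs)).1‖ :=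
  stmt_5_general A Auu Aus Asu Ass hA κ m hκ hAuu hpos vu vs hv
end

section
/- If v = (v_u, v_s) ∈ E_u × E_s satisfies ‖v_s‖ < κ·‖v_u‖ (in particular v_u ≠ 0), then ‖A(v)‖ ≥ μ·‖v_u‖ − σ·‖v_s‖ > ‖v_u‖ + ‖v_s‖; in particular ‖A(v)‖ > ‖v‖. -/
theorem stmt_6 {Eu Es F : Type*}
    [NormedAddCommGroup Eu] [NormedSpace ℝ Eu]
    [NormedAddCommGroup Es] [NormedSpace ℝ Es]
    [NormedAddCommGroup F] [NormedSpace ℝ F]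
    (A : Eu × Es →L[ℝ] F)
    (μ σ κ : ℝ) (hμ : 1 < μ) (hσ : 0 ≤ σ) (hκ : 0 < κ)
    (hAu : ∀ w : Eu, μ * ‖w‖ ≤ ‖A (w, 0)‖)
    (hAs : ∀ w : Es, ‖A (0, w)‖ ≤ σ * ‖w‖)
    (hκle : κ ≤ (μ - 1) / (σ + 1))
    (vu : Eu) (vs : Es) (hv : ‖vs‖ < κ * ‖vu‖) :
    μ * ‖vu‖ - σ * ‖vs‖ ≤ ‖A (vu, vs)‖ ∧
    ‖vu‖ + ‖vs‖ < μ * ‖vu‖ - σ * ‖vs‖ ∧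
    ‖(vu, vs)‖ < ‖A (vu, vs)‖ := by
  have hsplit : (vu, vs) = (vu, (0 : Es)) + ((0 : Eu), vs) := by simp
  have h1 : μ * ‖vu‖ - σ * ‖vs‖ ≤ ‖A (vu, vs)‖ := by
    have key := norm_sub_norm_le (A (vu, 0)) (A (vu, 0) + A (0, vs))
    simp only [sub_add_cancel_left, norm_neg] at key
    have hAv : A (vu, vs) = A (vu, 0) + A (0, vs) := by
      rw [hsplit, map_add]
    rw [hAv]
    have := hAu vu
    have := hAs vs
    linarith
  have hvs : (0:ℝ) ≤ ‖vs‖ := norm_nonneg _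
  have hvu : (0:ℝ) < ‖vu‖ := by nlinarith [norm_nonneg vu]
  have hκ' : κ * (σ + 1) ≤ μ - 1 :=
    (le_div_iff₀ (by linarith : (0:ℝ) < σ+1)).mp hκle
  have h2 : ‖vu‖ + ‖vs‖ < μ * ‖vu‖ - σ * ‖vs‖ := by
    nlinarith
  refine ⟨h1, h2, ?_⟩
  have hmax : ‖(vu, vs)‖ ≤ ‖vu‖ + ‖vs‖ := by
    rw [Prod.norm_def]
    exact max_le (by linarith) (by linarith)
  linarith
end

section
/- The map h is continuous on N. -/
/-!
Let `y` be a cluster point of `h` at `x ∈ N` along `N`. Since `h` conjugates `g` to `f` on `N`,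
`fⁿ y` is a cluster point of `h` at `gⁿ x`, and as `h` moves points by at most `Q/50`, the
doubling property gives `d(fⁿ y, gⁿ x) ≤ Q(gⁿ x)/25`. Hence `fⁿ y` stays within `Q(fⁿ(h x))` of
`fⁿ(h x) = h(gⁿ x)` for every `n`, and expansivity forces `y = h x`. In a compact space a map
with a unique cluster point at `x` is continuous at `x`.
-/

open Filter Topology Set

def Homeomorph.toPermHom (X : Type*) [TopologicalSpace X] : (X ≃ₜ X) →* Equiv.Perm X :=
  MonoidHom.mk' Homeomorph.toEquiv fun _ _ => rfl

lemma Homeomorph.continuous_toEquiv_zpow {X : Type*} [TopologicalSpace X] (f : X ≃ₜ X)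
    (n : ℤ) : Continuous ⇑(f.toEquiv ^ n) :=
  map_zpow (Homeomorph.toPermHom X) f n ▸ (f ^ n).continuous

def semiconjOnSubgroup {α β : Type*} (h : α → β) (s : Set α) :
    Subgroup (Equiv.Perm α × Equiv.Perm β) where
  carrier := {p | p.1 '' s = s ∧ ∀ x ∈ s, h (p.1 x) = p.2 (h x)}
  one_mem' := ⟨image_id s, fun _ _ => rfl⟩
  mul_mem' := by
    rintro ⟨σ₁, τ₁⟩ ⟨σ₂, τ₂⟩ ⟨hs₁, hc₁⟩ ⟨hs₂, hc₂⟩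
    refine ⟨by rw [Prod.fst_mul, Equiv.Perm.coe_mul, image_comp, hs₂, hs₁], fun x hx => ?_⟩
    have hx₂ : σ₂ x ∈ s := hs₂ ▸ mem_image_of_mem σ₂ hx
    simp only [Prod.fst_mul, Prod.snd_mul, Equiv.Perm.mul_apply, hc₁ _ hx₂, hc₂ x hx]
  inv_mem' := by
    rintro ⟨σ, τ⟩ ⟨hs, hc⟩
    have hs' : ⇑σ⁻¹ '' s = s := by
      conv_lhs => rw [← hs]
      exact σ.symm_image_image s
    refine ⟨hs', fun x hx => ?_⟩
    have hx' : σ⁻¹ x ∈ s := hs' ▸ mem_image_of_mem _ hx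
    simp only [Prod.fst_inv, Prod.snd_inv]
    rw [Equiv.Perm.eq_inv_iff_eq, ← hc _ hx']
    exact congrArg h (σ.apply_symm_apply x)

lemma image_zpow_eq_and_semiconjOn {α β : Type*} {h : α → β} {s : Set α}
    {σ : Equiv.Perm α} {τ : Equiv.Perm β} (hs : σ '' s = s)
    (hc : ∀ x ∈ s, h (σ x) = τ (h x)) (n : ℤ) :
    (σ ^ n) '' s = s ∧ ∀ x ∈ s, h ((σ ^ n) x) = (τ ^ n) (h x) :=
  (semiconjOnSubgroup h s).zpow_mem (x := (σ, τ)) ⟨hs, hc⟩ n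

lemma MapClusterPt.of_semiconjOn {X Y : Type*} [TopologicalSpace X] [TopologicalSpace Y]
    {h : X → Y} {G : X → X} {F : Y → Y} {s : Set X} {x : X} {y : Y}
    (hG : ContinuousAt G x) (hGs : MapsTo G s s) (hF : ContinuousAt F y)
    (hc : ∀ w ∈ s, h (G w) = F (h w)) (hy : MapClusterPt y (𝓝[s] x) h) :
    MapClusterPt (F y) (𝓝[s] (G x)) h := by
  have hFh : F ∘ h =ᶠ[𝓝[s] x] h ∘ G :=
    eventually_mem_nhdsWithin.mono fun w hw => (hc w hw).symm
  exact (hFh.mapClusterPt_iff.mp (hy.continuousAt_comp hF)).of_comp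
    (hG.continuousWithinAt.tendsto_nhdsWithin hGs)

lemma dist_le_of_mapClusterPt {M : Type*} [PseudoMetricSpace M] {N : Set M} {Q : M → ℝ}
    {h : M → M}
    (hQ : ∀ x ∈ N, ∀ y, dist x y ≤ Q x → Q y ≤ 2 * Q x)
    (hclose : ∀ x ∈ N, dist (h x) x ≤ Q x / 50) {x y : M} (hx : x ∈ N) (hQx : 0 < Q x)
    (hy : MapClusterPt y (𝓝[N] x) h) : dist y x ≤ Q x / 25 := by
  refine le_of_forall_pos_le_add fun ε hε => ?_
  have hnear : ∀ᶠ w in 𝓝[N] x, w ∈ N ∧ dist w x < min ε (Q x) :=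
    eventually_mem_nhdsWithin.and
      (mem_nhdsWithin_of_mem_nhds (Metric.ball_mem_nhds x (lt_min hε hQx)))
  refine Metric.isClosed_closedBall.mem_of_mapClusterPt hy ?_
  filter_upwards [hnear] with w ⟨hw, hwx⟩
  have hQw : Q w ≤ 2 * Q x := hQ x hx w (by rw [dist_comm]; exact hwx.le.trans (min_le_right _ _))
  rw [Metric.mem_closedBall]
  calc dist (h w) x ≤ dist (h w) w + dist w x := dist_triangle _ _ _
    _ ≤ Q x / 25 + ε := by linarith [hclose w hw, min_le_left ε (Q x)]

theorem stmt_7_general {M : Type*} [MetricSpace M] [CompactSpace M]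
    (f g : M ≃ₜ M) (N : Set M) (hgN : g '' N = N)
    (Q : M → ℝ) (hQ : ∀ z ∈ N, 0 < Q z ∧ Q z < Metric.infDist z Nᶜ)
    (hQdouble : ∀ x ∈ N, ∀ y : M, dist x y ≤ Q x →
      (1 / 2) * Q x ≤ Q y ∧ Q y ≤ 2 * Q x)
    (hexp : ∀ x ∈ N, ∀ y ∈ N,
      (∀ n : ℤ, dist ((f.toEquiv ^ n) x) ((f.toEquiv ^ n) y) ≤ Q ((f.toEquiv ^ n) x)) →
      x = y)
    (h : M → M) (hhN : ∀ x ∈ N, h x ∈ N)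
    (hconj : ∀ x ∈ N, h (g x) = f (h x))
    (hclose : ∀ x ∈ N, dist (h x) x ≤ Q x / 50) :
    ContinuousOn h N := by
  refine fun x hx => tendsto_nhds_of_unique_mapClusterPt fun y hy => ?_
  have hgn := image_zpow_eq_and_semiconjOn (τ := f.toEquiv) hgN hconj
  have hmaps (n : ℤ) : MapsTo (g.toEquiv ^ n) N N :=
    (mapsTo_image _ N).mono_right (hgn n).1.subset
  have hmem (n : ℤ) : (g.toEquiv ^ n) x ∈ N := hmaps n hx
  have hshadow (n : ℤ) :
      dist ((f.toEquiv ^ n) y) ((g.toEquiv ^ n) x) ≤ Q ((g.toEquiv ^ n) x) / 25 :=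
    dist_le_of_mapClusterPt (fun z hz w hzw => (hQdouble z hz w hzw).2) hclose (hmem n)
      (hQ _ (hmem n)).1 <| hy.of_semiconjOn (g.continuous_toEquiv_zpow n).continuousAt
        (hmaps n) (f.continuous_toEquiv_zpow n).continuousAt (hgn n).2
  have hyN : y ∈ N := by
    have hyx : dist y x ≤ Q x / 25 := by simpa using hshadow 0
    exact Metric.ball_infDist_compl_subset
      (Metric.mem_ball.2 (by linarith [(hQ x hx).1, (hQ x hx).2]))
  refine (hexp (h x) (hhN x hx) y hyN fun n => ?_).symm
  set z := (g.toEquiv ^ n) x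
  have hQhz : Q z / 2 ≤ Q (h z) := by
    have hzhz : dist z (h z) ≤ Q z := by
      rw [dist_comm]; linarith [hclose z (hmem n), (hQ z (hmem n)).1]
    linarith [(hQdouble z (hmem n) (h z) hzhz).1]
  rw [← (hgn n).2 x hx]
  calc dist (h z) ((f.toEquiv ^ n) y) ≤ dist (h z) z + dist ((f.toEquiv ^ n) y) z :=
        dist_triangle_right _ _ _
    _ ≤ Q (h z) := by linarith [hclose z (hmem n), hshadow n, (hQ z (hmem n)).1]

theorem stmt_7 {M : Type*} [MetricSpace M] [CompactSpace M]
    (f g : M ≃ₜ M) (N : Set M) (hfN : f '' N = N) (hgN : g '' N = N)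
    (Q : M → ℝ) (hQ : ∀ z ∈ N, 0 < Q z ∧ Q z < Metric.infDist z Nᶜ)
    (hQdouble : ∀ x ∈ N, ∀ y : M, dist x y ≤ Q x →
      (1 / 2) * Q x ≤ Q y ∧ Q y ≤ 2 * Q x)
    (hexp : ∀ x ∈ N, ∀ y ∈ N,
      (∀ n : ℤ, dist ((f.toEquiv ^ n) x) ((f.toEquiv ^ n) y) ≤ Q ((f.toEquiv ^ n) x)) →
      x = y)
    (h : M → M) (hhN : ∀ x ∈ N, h x ∈ N)
    (hconj : ∀ x ∈ N, h (g x) = f (h x))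
    (hclose : ∀ x ∈ N, dist (h x) x ≤ Q x / 50) :
    ContinuousOn h N :=
  stmt_7_general f g N hgN Q hQ hQdouble hexp h hhN hconj hclose
end

section
/- The map h is injective on N, i.e., for all x, y ∈ N, h(x) = h(y) implies x = y. -/
/-!
If `h x = h y` then, by the semiconjugacy, `h (gⁿ x) = fⁿ (h x) = fⁿ (h y) = h (gⁿ y)` for every
`n : ℤ`, and since `h` moves points of `N` by at most `B`, the orbits of `x` and `y` stay within
`2B < r x n` of each other. Expansivity of `g` then forces `x = y`.
-/

open Pointwise

namespace Equiv.Perm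

variable {M : Type*} {g : Perm M} {N : Set M}

theorem zpow_image_eq_of_image_eq (hgN : g '' N = N) (n : ℤ) : ⇑(g ^ n) '' N = N := by
  have hg : g ∈ MulAction.stabilizer (Perm M) N := by
    rw [MulAction.mem_stabilizer_iff, ← Set.image_smul]
    exact hgN
  have hgn := MulAction.mem_stabilizer_iff.mp (zpow_mem hg n)
  rwa [← Set.image_smul] at hgn

theorem zpow_apply_mem_of_image_eq (hgN : g '' N = N) (n : ℤ) {x : M} (hx : x ∈ N) :
    (g ^ n) x ∈ N :=
  zpow_image_eq_of_image_eq hgN n ▸ Set.mem_image_of_mem _ hx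

theorem semiconj_zpow_on {f : Perm M} {h : M → M} (hgN : g '' N = N)
    (hconj : ∀ x ∈ N, h (g x) = f (h x)) (n : ℤ) : ∀ x ∈ N, h ((g ^ n) x) = (f ^ n) (h x) := by
  induction n using Int.induction_on with
  | zero => simp
  | succ n ih =>
    intro x hx
    have hx' : g x ∈ N := hgN ▸ Set.mem_image_of_mem g hx
    rw [zpow_add_one, zpow_add_one, mul_apply, mul_apply, ih _ hx', hconj x hx]
  | pred n ih =>
    intro x hx
    have hx' : g⁻¹ x ∈ N := by simpa using zpow_apply_mem_of_image_eq hgN (-1) hx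
    have hconj_inv : h (g⁻¹ x) = f⁻¹ (h x) :=
      eq_inv_iff_eq.mpr (by rw [← hconj _ hx', ← mul_apply, mul_inv_cancel, one_apply])
    rw [zpow_sub_one, zpow_sub_one, mul_apply, mul_apply, ih _ hx', hconj_inv]

end Equiv.Perm

theorem dist_le_two_mul_of_apply_eq {M : Type*} [PseudoMetricSpace M] {h : M → M} {B : ℝ}
    {x y : M} (hx : dist (h x) x ≤ B) (hy : dist (h y) y ≤ B) (hxy : h x = h y) :
    dist x y ≤ 2 * B :=
  calc dist x y ≤ dist x (h x) + dist (h y) y := by rw [hxy]; exact dist_triangle _ _ _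
    _ ≤ B + B := add_le_add (dist_comm x (h x) ▸ hx) hy
    _ = 2 * B := by ring

theorem stmt_9_general {M : Type*} [MetricSpace M] (f g : Equiv.Perm M) (N : Set M)
    (hgN : g '' N = N)
    (h : M → M)
    (hconj : ∀ x ∈ N, h (g x) = f (h x))
    (B : ℝ) (hclose : ∀ x ∈ N, dist (h x) x ≤ B)
    (r : M → ℤ → ℝ) (hr : ∀ x ∈ N, ∀ n : ℤ, 2 * B < r x n)
    (hexp : ∀ x ∈ N, ∀ y ∈ N,
      (∀ n : ℤ, dist ((g ^ n) x) ((g ^ n) y) ≤ r x n) → x = y) :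
    ∀ x ∈ N, ∀ y ∈ N, h x = h y → x = y := by
  intro x hx y hy hxy
  refine hexp x hx y hy fun n => ?_
  have hxn := Equiv.Perm.zpow_apply_mem_of_image_eq hgN n hx
  have hyn := Equiv.Perm.zpow_apply_mem_of_image_eq hgN n hy
  have hhn : h ((g ^ n) x) = h ((g ^ n) y) := by
    rw [Equiv.Perm.semiconj_zpow_on hgN hconj n x hx,
      Equiv.Perm.semiconj_zpow_on hgN hconj n y hy, hxy]
  exact (dist_le_two_mul_of_apply_eq (hclose _ hxn) (hclose _ hyn) hhn).trans (hr x hx n).le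

theorem stmt_9 {M : Type*} [MetricSpace M] (f g : Equiv.Perm M) (N : Set M)
    (hfN : f '' N = N) (hgN : g '' N = N)
    (h : M → M) (hhN : ∀ x ∈ N, h x ∈ N)
    (hconj : ∀ x ∈ N, h (g x) = f (h x))
    (B : ℝ) (hB : 0 ≤ B) (hclose : ∀ x ∈ N, dist (h x) x ≤ B)
    (r : M → ℤ → ℝ) (hr : ∀ x ∈ N, ∀ n : ℤ, 2 * B < r x n)
    (hexp : ∀ x ∈ N, ∀ y ∈ N,
      (∀ n : ℤ, dist ((g ^ n) x) ((g ^ n) y) ≤ r x n) → x = y) :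
    ∀ x ∈ N, ∀ y ∈ N, h x = h y → x = y :=
  stmt_9_general f g N hgN h hconj B hclose r hr hexp
end

section
/- For every x ∈ N, h(g(x)) = f(h(x)). -/
theorem stmt_10 {M : Type*} [MetricSpace M] (f g : Equiv.Perm M) (N : Set M)
    (hgN : g '' N = N) (Q : M → ℝ) (h : M → M)
    (hshadow : ∀ x ∈ N, ∀ n : ℤ, dist ((f ^ n) (h x)) ((g ^ n) x) ≤ Q ((g ^ n) x))
    (huniq : ∀ x ∈ N, ∀ y : M,
      (∀ n : ℤ, dist ((f ^ n) y) ((g ^ n) x) ≤ Q ((g ^ n) x)) → y = h x) :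
    ∀ x ∈ N, h (g x) = f (h x) := by
  intro x hx
  have hgx : g x ∈ N := hgN ▸ ⟨x, hx, rfl⟩
  refine (huniq (g x) hgx (f (h x)) ?_).symm
  intro n
  have hf : (f ^ n) (f (h x)) = (f ^ (n + 1)) (h x) := by
    rw [zpow_add, zpow_one, Equiv.Perm.mul_apply]
  have hg : (g ^ n) (g x) = (g ^ (n + 1)) x := by
    rw [zpow_add, zpow_one, Equiv.Perm.mul_apply]
  rw [hf, hg]
  exact hshadow x hx (n + 1)
end

section
/- For every k ∈ ℕ one has u(k) ≤ s(k) ≤ s(k+1) and s(k) ≥ (∏_{i<k} μ(i)) · s(0). Consequently, if in addition there is D ≥ 0 with s(k) ≤ D for all k and the partial products ∏_{i<k} μ(i) tend to infinity as k → ∞, then s(0) = 0. -/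
open Filter

theorem stmt_11 (u s a b c μ : ℕ → ℝ)
    (hu : ∀ k, 0 ≤ u k) (hs : ∀ k, 0 ≤ s k) (ha : ∀ k, 0 ≤ a k)
    (hb : ∀ k, 0 ≤ b k) (hc : ∀ k, 0 ≤ c k) (hμ0 : ∀ k, 0 ≤ μ k)
    (hu0 : u 0 = 0)
    (hrec_u : ∀ k, u (k + 1) ≤ a k * u k + b k * s k)
    (hrec_s : ∀ k, c k * s k - b k * u k ≤ s (k + 1))
    (hab : ∀ k, a k + 2 * b k ≤ 1)
    (hμ : ∀ k, 1 ≤ μ k ∧ μ k ≤ c k - 2 * b k) :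
    (∀ k, u k ≤ s k ∧ s k ≤ s (k + 1) ∧
      (∏ i ∈ Finset.range k, μ i) * s 0 ≤ s k) ∧
    (∀ D : ℝ, 0 ≤ D → (∀ k, s k ≤ D) →
      Tendsto (fun k => ∏ i ∈ Finset.range k, μ i) atTop atTop → s 0 = 0) := by
  have key : ∀ k, u k ≤ s k ∧ (∏ i ∈ Finset.range k, μ i) * s 0 ≤ s k := by
    intro k
    induction k with
    | zero => simp [hu0, hs 0]
    | succ k ih =>
      obtain ⟨hus, hprod⟩ := ih
      have hμk := hμ k
      have hstep : μ k * s k ≤ s (k + 1) := by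
        have h1 : c k * s k - b k * u k ≤ s (k + 1) := hrec_s k
        have h2 : b k * u k ≤ b k * s k := mul_le_mul_of_nonneg_left hus (hb k)
        nlinarith [hs k, hb k, hμk.1, hμk.2]
      constructor
      · have h1 : u (k + 1) ≤ a k * u k + b k * s k := hrec_u k
        nlinarith [hs k, hb k, ha k, hμk.1, hμk.2, hab k,
          mul_le_mul_of_nonneg_left hus (ha k)]
      · rw [Finset.prod_range_succ]
        calc (∏ i ∈ Finset.range k, μ i) * μ k * s 0
            = μ k * ((∏ i ∈ Finset.range k, μ i) * s 0) := by ring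
          _ ≤ μ k * s k := mul_le_mul_of_nonneg_left hprod (hμ0 k)
          _ ≤ s (k + 1) := hstep
  have mono : ∀ k, s k ≤ s (k + 1) := by
    intro k
    have hμk := hμ k
    have hstep : μ k * s k ≤ s (k + 1) := by
      have h2 : b k * u k ≤ b k * s k := mul_le_mul_of_nonneg_left (key k).1 (hb k)
      nlinarith [hrec_s k, hs k, hb k, hμk.1, hμk.2]
    nlinarith [hs k, hμk.1]
  refine ⟨fun k => ⟨(key k).1, mono k, (key k).2⟩, ?_⟩
  intro D hD hsD htend
  by_contra h0
  have hs0 : 0 < s 0 := lt_of_le_of_ne (hs 0) (Ne.symm h0)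
  obtain ⟨k, hk⟩ := (htend.eventually_ge_atTop (D / s 0 + 1)).exists
  have h1 : (∏ i ∈ Finset.range k, μ i) * s 0 ≤ D := le_trans (key k).2 (hsD k)
  have h2 : (D / s 0 + 1) * s 0 ≤ (∏ i ∈ Finset.range k, μ i) * s 0 :=
    mul_le_mul_of_nonneg_right hk hs0.le
  have : (D / s 0 + 1) * s 0 = D + s 0 := by field_simp
  linarith
end

section
/- If ‖φ₁(v) − φ₂(v)‖ ≤ Δ for all v ∈ B, then ‖φ̃₁(w) − φ̃₂(w)‖ ≤ (‖A_ss‖ + ‖A_us‖ + 2L)·Δ for all w ∈ B′. -/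
open NNReal

theorem stmt_12 {Eu Es Fu Fs : Type*}
    [NormedAddCommGroup Eu] [NormedSpace ℝ Eu]
    [NormedAddCommGroup Es] [NormedSpace ℝ Es]
    [NormedAddCommGroup Fu] [NormedSpace ℝ Fu]
    [NormedAddCommGroup Fs] [NormedSpace ℝ Fs]
    (Q Q' : ℝ) (hQ : 0 < Q) (hQ' : 0 < Q')
    (Auu : Eu →L[ℝ] Fu) (Aus : Es →L[ℝ] Fu) (Asu : Eu →L[ℝ] Fs) (Ass : Es →L[ℝ] Fs)
    (ψu : Eu × Es → Fu) (ψs : Eu × Es → Fs) (L : ℝ) (hL : 0 ≤ L)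
    -- ψ = (ψu, ψs) is Lipschitz with constant L (sum norm on Eu × Es):
    (hψu : ∀ p q : Eu × Es, ‖ψu p - ψu q‖ ≤ L * (‖p.1 - q.1‖ + ‖p.2 - q.2‖))
    (hψs : ∀ p q : Eu × Es, ‖ψs p - ψs q‖ ≤ L * (‖p.1 - q.1‖ + ‖p.2 - q.2‖))
    (φ₁ φ₂ : Eu → Es) (G₁ G₂ : Eu → Fu) (L₁ L₂ : Eu → Fs)
    (hG₁ : ∀ v, G₁ v = Auu v + Aus (φ₁ v) + ψu (v, φ₁ v))
    (hL₁ : ∀ v, L₁ v = Asu v + Ass (φ₁ v) + ψs (v, φ₁ v))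
    (hG₂ : ∀ v, G₂ v = Auu v + Aus (φ₂ v) + ψu (v, φ₂ v))
    (hL₂ : ∀ v, L₂ v = Asu v + Ass (φ₂ v) + ψs (v, φ₂ v))
    (K : ℝ≥0) (hK : K ≤ 1) (φt₂ : Fu → Fs) (hφt₂Lip : LipschitzWith K φt₂)
    (hφt₂ : ∀ v ∈ Metric.closedBall (0 : Eu) Q, φt₂ (G₂ v) = L₂ v)
    (φt₁ : Fu → Fs)
    (hφt₁ : ∀ w ∈ Metric.closedBall (0 : Fu) Q',
      ∃ v ∈ Metric.closedBall (0 : Eu) Q, G₁ v = w ∧ φt₁ w = L₁ v)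
    (Δ : ℝ) (hΔ0 : 0 ≤ Δ)
    (hΔ : ∀ v ∈ Metric.closedBall (0 : Eu) Q, ‖φ₁ v - φ₂ v‖ ≤ Δ) :
    ∀ w ∈ Metric.closedBall (0 : Fu) Q',
      ‖φt₁ w - φt₂ w‖ ≤ (‖Ass‖ + ‖Aus‖ + 2 * L) * Δ := by
  intro w hw
  obtain ⟨v, hv, hGv, hφ⟩ := hφt₁ w hw
  have hφΔ := hΔ v hv
  have h1 : ‖L₁ v - L₂ v‖ ≤ (‖Ass‖ + L) * Δ := by
    have : L₁ v - L₂ v = Ass (φ₁ v) - Ass (φ₂ v) + (ψs (v, φ₁ v) - ψs (v, φ₂ v)) := by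
      rw [hL₁, hL₂]; abel
    rw [this]
    calc ‖Ass (φ₁ v) - Ass (φ₂ v) + (ψs (v, φ₁ v) - ψs (v, φ₂ v))‖
        ≤ ‖Ass (φ₁ v) - Ass (φ₂ v)‖ + ‖ψs (v, φ₁ v) - ψs (v, φ₂ v)‖ := norm_add_le _ _
      _ ≤ ‖Ass‖ * Δ + L * Δ := by
          gcongr
          · calc ‖Ass (φ₁ v) - Ass (φ₂ v)‖ = ‖Ass (φ₁ v - φ₂ v)‖ := by rw [map_sub]
              _ ≤ ‖Ass‖ * ‖φ₁ v - φ₂ v‖ := Ass.le_opNorm _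
              _ ≤ ‖Ass‖ * Δ := by gcongr
          · calc ‖ψs (v, φ₁ v) - ψs (v, φ₂ v)‖ ≤ L * (‖v - v‖ + ‖φ₁ v - φ₂ v‖) :=
                hψs (v, φ₁ v) (v, φ₂ v)
              _ = L * ‖φ₁ v - φ₂ v‖ := by simp
              _ ≤ L * Δ := by gcongr
      _ = (‖Ass‖ + L) * Δ := by ring
  have h2 : ‖G₁ v - G₂ v‖ ≤ (‖Aus‖ + L) * Δ := by
    have : G₁ v - G₂ v = Aus (φ₁ v) - Aus (φ₂ v) + (ψu (v, φ₁ v) - ψu (v, φ₂ v)) := by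
      rw [hG₁, hG₂]; abel
    rw [this]
    calc ‖Aus (φ₁ v) - Aus (φ₂ v) + (ψu (v, φ₁ v) - ψu (v, φ₂ v))‖
        ≤ ‖Aus (φ₁ v) - Aus (φ₂ v)‖ + ‖ψu (v, φ₁ v) - ψu (v, φ₂ v)‖ := norm_add_le _ _
      _ ≤ ‖Aus‖ * Δ + L * Δ := by
          gcongr
          · calc ‖Aus (φ₁ v) - Aus (φ₂ v)‖ = ‖Aus (φ₁ v - φ₂ v)‖ := by rw [map_sub]
              _ ≤ ‖Aus‖ * ‖φ₁ v - φ₂ v‖ := Aus.le_opNorm _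
              _ ≤ ‖Aus‖ * Δ := by gcongr
          · calc ‖ψu (v, φ₁ v) - ψu (v, φ₂ v)‖ ≤ L * (‖v - v‖ + ‖φ₁ v - φ₂ v‖) :=
                hψu (v, φ₁ v) (v, φ₂ v)
              _ = L * ‖φ₁ v - φ₂ v‖ := by simp
              _ ≤ L * Δ := by gcongr
      _ = (‖Aus‖ + L) * Δ := by ring
  have h3 : ‖φt₂ (G₁ v) - φt₂ (G₂ v)‖ ≤ (‖Aus‖ + L) * Δ := by
    calc ‖φt₂ (G₁ v) - φt₂ (G₂ v)‖ = dist (φt₂ (G₁ v)) (φt₂ (G₂ v)) := (dist_eq_norm _ _).symm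
      _ ≤ K * dist (G₁ v) (G₂ v) := hφt₂Lip.dist_le_mul _ _
      _ ≤ 1 * dist (G₁ v) (G₂ v) :=
          mul_le_mul_of_nonneg_right (by exact_mod_cast hK) dist_nonneg
      _ = ‖G₁ v - G₂ v‖ := by rw [one_mul, dist_eq_norm]
      _ ≤ (‖Aus‖ + L) * Δ := h2
  have key : φt₁ w - φt₂ w = (L₁ v - L₂ v) + (φt₂ (G₂ v) - φt₂ (G₁ v)) := by
    rw [hφ, ← hGv, hφt₂ v hv]; abel
  calc ‖φt₁ w - φt₂ w‖ = ‖(L₁ v - L₂ v) + (φt₂ (G₂ v) - φt₂ (G₁ v))‖ := by rw [key]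
    _ ≤ ‖L₁ v - L₂ v‖ + ‖φt₂ (G₂ v) - φt₂ (G₁ v)‖ := norm_add_le _ _
    _ = ‖L₁ v - L₂ v‖ + ‖φt₂ (G₁ v) - φt₂ (G₂ v)‖ := by rw [norm_sub_rev (φt₂ (G₂ v))]
    _ ≤ (‖Ass‖ + L) * Δ + (‖Aus‖ + L) * Δ := add_le_add h1 h3
    _ = (‖Ass‖ + ‖Aus‖ + 2 * L) * Δ := by ring
end
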